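/- For real σ with 0 < σ < 1, ζ(σ) ≠ 0. -/

import Mathlib

/-!
Pair the terms of the alternating series `η(s) = ∑ (-1)^(n+1) n^(-s)`: by the mean value theorem
each pair `(2k+1)^(-s) - (2k+2)^(-s)` is `O(|s| k^(-re s - 1))`, so the paired series is holomorphic
on `re s > 0`. For `re s > 1` splitting `ζ` into odd and even terms gives
`η(s) = (1 - 2^(1-s)) ζ(s)`, and by analytic continuation this persists on the punctured
half-plane. For real `σ > 0` every pair is positive, so `η(σ) > 0` and hence `ζ(σ) ≠ 0`.
-/

open Complex Set

lemma norm_ofReal_cpow_neg_sub_le {s : ℂ} (hs : -1 ≤ s.re) {a b : ℝ} (ha : 0 < a)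
    (hab : a ≤ b) :
    ‖(a : ℂ) ^ (-s) - (b : ℂ) ^ (-s)‖ ≤ ‖s‖ * a ^ (-s.re - 1) * (b - a) := by
  rcases eq_or_ne s 0 with rfl | hs0
  · simp
  have hderiv : ∀ x ∈ Icc a b, HasDerivWithinAt (fun y : ℝ ↦ (y : ℂ) ^ (-s))
      (-s * (x : ℂ) ^ (-s - 1)) (Icc a b) x := fun x hx ↦
    (hasDerivAt_ofReal_cpow_const (ha.trans_le hx.1).ne' (neg_ne_zero.2 hs0)).hasDerivWithinAt
  have hbound (x : ℝ) (hx : x ∈ Icc a b) :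
      ‖-s * (x : ℂ) ^ (-s - 1)‖ ≤ ‖s‖ * a ^ (-s.re - 1) := by
    rw [norm_mul, norm_neg, norm_cpow_eq_rpow_re_of_pos (ha.trans_le hx.1)]
    gcongr
    simpa using Real.rpow_le_rpow_of_nonpos ha hx.1 (by linarith)
  have := (convex_Icc a b).norm_image_sub_le_of_norm_hasDerivWithin_le hderiv hbound
    (left_mem_Icc.2 hab) (right_mem_Icc.2 hab)
  rwa [Real.norm_of_nonneg (sub_nonneg.2 hab), ← norm_neg, neg_sub] at this

lemma summable_nat_add_one_rpow {p : ℝ} (hp : p < -1) :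
    Summable (fun k : ℕ ↦ ((k : ℝ) + 1) ^ p) := by
  exact_mod_cast (summable_nat_add_iff 1).2 (Real.summable_nat_rpow.2 hp)

lemma isPreconnected_re_pos_diff_one : IsPreconnected ({s : ℂ | 0 < s.re} \ {1}) := by
  have hright := (convex_halfSpace_re_gt 1).isPreconnected
  have hupper := ((convex_halfSpace_re_gt 0).inter (convex_halfSpace_im_gt 0)).isPreconnected
  have hlower := ((convex_halfSpace_re_gt 0).inter (convex_halfSpace_im_lt 0)).isPreconnected
  have hstrip := ((convex_halfSpace_re_gt 0).inter (convex_halfSpace_re_lt 1)).isPreconnected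
  have hU : {s : ℂ | 0 < s.re} \ {1} = (({s | 1 < s.re} ∪ {s | 0 < s.re ∧ 0 < s.im}) ∪
      {s | 0 < s.re ∧ s.im < 0}) ∪ {s | 0 < s.re ∧ s.re < 1} := by
    ext s
    simp only [mem_sdiff, mem_ofPred_eq, mem_singleton_iff, mem_union, Complex.ext_iff, one_re,
      one_im]
    grind
  rw [hU]
  refine ((hright.union (2 + I) ?_ ?_ hupper).union (2 - I) ?_ ?_ hlower).union (1 / 2 + I) ?_ ?_
    hstrip <;> norm_num

noncomputable def dirichletEtaTerm (k : ℕ) (s : ℂ) : ℂ :=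
  ((2 * k + 1 : ℕ) : ℂ) ^ (-s) - ((2 * k + 2 : ℕ) : ℂ) ^ (-s)

/-- The Dirichlet eta function `∑ (-1)^(n+1) n^(-s)` with consecutive terms paired, so that the
series converges absolutely on `0 < re s`. -/
noncomputable def dirichletEta (s : ℂ) : ℂ := ∑' k, dirichletEtaTerm k s

lemma norm_dirichletEtaTerm_le (k : ℕ) {s : ℂ} {δ R : ℝ} (hδ : -1 ≤ δ) (hs : δ ≤ s.re)
    (hR : ‖s‖ ≤ R) : ‖dirichletEtaTerm k s‖ ≤ R * ((k : ℝ) + 1) ^ (-δ - 1) := by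
  have h := norm_ofReal_cpow_neg_sub_le (hδ.trans hs) (a := 2 * k + 1) (b := 2 * k + 2)
    (by positivity) (by linarith)
  rw [add_sub_add_left_eq_sub, show (2 : ℝ) - 1 = 1 by norm_num, mul_one] at h
  have hk : (0 : ℝ) ≤ k := k.cast_nonneg
  have hR0 : 0 ≤ R := (norm_nonneg s).trans hR
  calc ‖dirichletEtaTerm k s‖ ≤ ‖s‖ * (2 * k + 1 : ℝ) ^ (-s.re - 1) := by
        simpa [dirichletEtaTerm, ← ofReal_natCast] using h
    _ ≤ R * (2 * k + 1 : ℝ) ^ (-δ - 1) :=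
        mul_le_mul hR (Real.rpow_le_rpow_of_exponent_le (by linarith) (by linarith))
          (by positivity) hR0
    _ ≤ R * ((k : ℝ) + 1) ^ (-δ - 1) :=
        mul_le_mul_of_nonneg_left
          (Real.rpow_le_rpow_of_nonpos (by positivity) (by linarith) (by linarith)) hR0

lemma summable_dirichletEtaTerm {s : ℂ} (hs : 0 < s.re) :
    Summable (fun k ↦ dirichletEtaTerm k s) :=
  .of_norm_bounded ((summable_nat_add_one_rpow (by linarith)).mul_left ‖s‖)
    fun k ↦ norm_dirichletEtaTerm_le k (by linarith) le_rfl le_rfl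

lemma differentiable_dirichletEtaTerm (k : ℕ) : Differentiable ℂ (dirichletEtaTerm k) :=
  (differentiable_neg.const_cpow (.inl (Nat.cast_ne_zero.2 (by omega)))).sub
    (differentiable_neg.const_cpow (.inl (Nat.cast_ne_zero.2 (by omega))))

lemma differentiableAt_dirichletEta {s : ℂ} (hs : 0 < s.re) :
    DifferentiableAt ℂ dirichletEta s := by
  set U : Set ℂ := {z | s.re / 2 < z.re ∧ ‖z‖ < ‖s‖ + 1}
  have hU : IsOpen U :=
    (isOpen_lt continuous_const continuous_re).inter (isOpen_lt continuous_norm continuous_const)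
  have hsU : s ∈ U := ⟨by linarith, by linarith⟩
  refine (differentiableOn_tsum_of_summable_norm
    ((summable_nat_add_one_rpow (p := -(s.re / 2) - 1) (by linarith)).mul_left (‖s‖ + 1))
    (fun k ↦ (differentiable_dirichletEtaTerm k).differentiableOn) hU
    fun k z hz ↦ norm_dirichletEtaTerm_le k (by linarith) hz.1.le hz.2.le).differentiableAt
    (hU.mem_nhds hsU)

lemma dirichletEta_eq_mul_riemannZeta_of_one_lt_re {s : ℂ} (hs : 1 < s.re) :
    dirichletEta s = (1 - 2 ^ (1 - s)) * riemannZeta s := by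
  set a : ℕ → ℂ := fun n ↦ ((n + 1 : ℕ) : ℂ) ^ (-s)
  have ha : HasSum a (riemannZeta s) := by
    have hsum : Summable a := by
      simpa [a, ← cpow_neg, one_div] using
        (summable_nat_add_iff 1).2 (Complex.summable_one_div_nat_cpow.2 hs)
    convert hsum.hasSum using 1
    simp [zeta_eq_tsum_one_div_nat_add_one_cpow hs, a, cpow_neg]
  have hodd_term (k : ℕ) : a (2 * k + 1) = 2 ^ (-s) * a k := by
    simp only [a]
    rw [show 2 * k + 1 + 1 = 2 * (k + 1) by ring, Nat.cast_mul, natCast_mul_natCast_cpow,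
      Nat.cast_ofNat]
  have hodd : HasSum (fun k ↦ a (2 * k + 1)) (2 ^ (-s) * riemannZeta s) := by
    simpa only [hodd_term] using ha.mul_left (2 ^ (-s))
  obtain ⟨e, heven⟩ : Summable (fun k ↦ a (2 * k)) :=
    ha.summable.comp_injective (mul_right_injective₀ two_ne_zero)
  have he : e = riemannZeta s - 2 ^ (-s) * riemannZeta s :=
    eq_sub_of_add_eq ((heven.even_add_odd hodd).unique ha)
  have h2 : (2 : ℂ) ^ (1 - s) = 2 * 2 ^ (-s) := by
    rw [sub_eq_add_neg, cpow_add _ _ two_ne_zero, cpow_one]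
  change ∑' k, (a (2 * k) - a (2 * k + 1)) = _
  rw [(heven.sub hodd).tsum_eq, he, h2]
  ring

theorem dirichletEta_eq_mul_riemannZeta {s : ℂ} (hs : 0 < s.re) (hs1 : s ≠ 1) :
    dirichletEta s = (1 - 2 ^ (1 - s)) * riemannZeta s := by
  set U : Set ℂ := {s | 0 < s.re} \ {1}
  have hU : IsOpen U := (isOpen_lt continuous_const continuous_re).sdiff isClosed_singleton
  have hη : AnalyticOnNhd ℂ dirichletEta U := DifferentiableOn.analyticOnNhd
    (fun z hz ↦ (differentiableAt_dirichletEta hz.1).differentiableWithinAt) hU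
  have hζ : AnalyticOnNhd ℂ (fun s ↦ (1 - 2 ^ (1 - s)) * riemannZeta s) U :=
    DifferentiableOn.analyticOnNhd (fun z hz ↦ (((differentiableAt_const 1).sub
      ((differentiableAt_id.const_sub 1).const_cpow (.inl two_ne_zero))).mul
      (differentiableAt_riemannZeta hz.2)).differentiableWithinAt) hU
  refine hη.eqOn_of_preconnected_of_eventuallyEq hζ isPreconnected_re_pos_diff_one
    (z₀ := 2) (by norm_num [U]) ?_ ⟨hs, hs1⟩
  filter_upwards [(isOpen_lt continuous_const continuous_re).mem_nhds
    (show (1 : ℝ) < (2 : ℂ).re by norm_num)] with z hz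
    using dirichletEta_eq_mul_riemannZeta_of_one_lt_re hz

lemma dirichletEta_ofReal_re_pos {σ : ℝ} (hσ : 0 < σ) : 0 < (dirichletEta σ).re := by
  have hterm (k : ℕ) : 0 < (dirichletEtaTerm k σ).re := by
    simp only [dirichletEtaTerm, sub_re, ← ofReal_natCast, ← ofReal_neg,
      ← ofReal_cpow (Nat.cast_nonneg _), ofReal_re]
    exact sub_pos.2 (Real.rpow_lt_rpow_of_neg (by positivity) (by push_cast; linarith)
      (by linarith))
  have hsum := summable_dirichletEtaTerm (s := σ) (by simpa using hσ)
  rw [dirichletEta, re_tsum hsum]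
  exact (hsum.mapL reCLM).tsum_pos (fun k ↦ (hterm k).le) 0 (hterm 0)

theorem stmt_5 (σ : ℝ) (h1 : 0 < σ) (h2 : σ < 1) :
    riemannZeta σ ≠ 0 := by
  intro hζ
  have hη := dirichletEta_eq_mul_riemannZeta (s := σ) (by simpa using h1)
    (by exact_mod_cast h2.ne)
  rw [hζ, mul_zero] at hη
  simpa [hη] using dirichletEta_ofReal_re_pos h1
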